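/- arXiv:2101.06797 — 8 statements merged into one kernel-verified Lean document; each statement's English description precedes it below -/
import Mathlib

section
/- Let F be a field and let ρ : H → GL(n, F) be any group homomorphism from the integral Heisenberg group H (upper unitriangular 3×3 integer matrices) to GL(n, F). Then the image under ρ of the central generator z (the unitriangular matrix with a single 1 in the top-right corner) has all eigenvalues (over the algebraic closure of F) equal to roots of unity. -/
/-- The integral Heisenberg group: `⟨a, b, c⟩` corresponds to the upper
unitriangular matrix `[[1, a, c], [0, 1, b], [0, 0, 1]]`. -/
@[ext]
structure Heisenberg where
  a : ℤ
  b : ℤ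
  c : ℤ

namespace Heisenberg

instance : Mul Heisenberg := ⟨fun p q => ⟨p.a + q.a, p.b + q.b, p.c + q.c + p.a * q.b⟩⟩
instance : One Heisenberg := ⟨⟨0, 0, 0⟩⟩
instance : Inv Heisenberg := ⟨fun p => ⟨-p.a, -p.b, -p.c + p.a * p.b⟩⟩

@[simp] lemma mul_a (p q : Heisenberg) : (p * q).a = p.a + q.a := rfl
@[simp] lemma mul_b (p q : Heisenberg) : (p * q).b = p.b + q.b := rfl
@[simp] lemma mul_c (p q : Heisenberg) : (p * q).c = p.c + q.c + p.a * q.b := rfl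
@[simp] lemma one_a : (1 : Heisenberg).a = 0 := rfl
@[simp] lemma one_b : (1 : Heisenberg).b = 0 := rfl
@[simp] lemma one_c : (1 : Heisenberg).c = 0 := rfl
@[simp] lemma inv_a (p : Heisenberg) : p⁻¹.a = -p.a := rfl
@[simp] lemma inv_b (p : Heisenberg) : p⁻¹.b = -p.b := rfl
@[simp] lemma inv_c (p : Heisenberg) : p⁻¹.c = -p.c + p.a * p.b := rfl

instance : Group Heisenberg where
  mul_assoc p q r := by ext <;> simp <;> ring
  one_mul p := by ext <;> simp
  mul_one p := by ext <;> simp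
  inv_mul_cancel p := by ext <;> simp <;> ring

/-- The central generator `z`, with a single `1` in the top-right corner. -/
def z : Heisenberg := ⟨0, 0, 1⟩

end Heisenberg

/-!
Let `V_μ` be the generalized `μ`-eigenspace of `ρ z`, over the algebraic closure. Since `z` is
central, `V_μ` is stable under the whole group, and on `V_μ` the operator `ρ z` is `μ` plus a
nilpotent, so its determinant there is `μ ^ dim V_μ`. But `z = ⁅x, y⁆` is a commutator, so every
determinant of `ρ z` restricted to an invariant subspace is `1`; and `dim V_μ > 0` because `μ` is
an eigenvalue.
-/

open Module Polynomial

namespace LinearMap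

variable {R M : Type*} [CommRing R] [IsDomain R] [AddCommGroup M] [Module R M]
  [Module.Free R M] [Module.Finite R M]

theorem charpoly_eq_X_sub_C_pow_of_isNilpotent_sub {f : End R M} {μ : R}
    (h : IsNilpotent (f - algebraMap R (End R M) μ)) :
    f.charpoly = (X - C μ) ^ finrank R M := by
  have hN := h.charpoly_eq_X_pow_finrank
  rw [Algebra.algebraMap_eq_smul_one, charpoly_sub_smul] at hN
  calc f.charpoly = (f.charpoly.comp (X + C μ)).comp (X - C μ) := by
        rw [Polynomial.comp_assoc]; simp
    _ = (X - C μ) ^ finrank R M := by rw [hN, X_pow_comp]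

theorem det_eq_pow_finrank_of_isNilpotent_sub {f : End R M} {μ : R}
    (h : IsNilpotent (f - algebraMap R (End R M) μ)) :
    f.det = μ ^ finrank R M := by
  rw [det_eq_sign_charpoly_coeff, charpoly_eq_X_sub_C_pow_of_isNilpotent_sub h,
    coeff_zero_eq_eval_zero]
  simp [← mul_pow]

end LinearMap

namespace Representation

variable {G K V : Type*} [Group G]

theorem det_eq_one_of_mem_commutator [CommRing K] [AddCommGroup V] [Module K V]
    (ρ : Representation K G V) {g : G} (hg : g ∈ commutator G) : (ρ g).det = 1 := by
  simpa [Units.ext_iff] using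
    Abelianization.commutator_subset_ker (LinearMap.det.comp ρ).toHomUnits hg

variable [Field K] [AddCommGroup V] [Module K V]

def maxGenEigenspaceSubrepresentation (ρ : Representation K G V) {z : G}
    (hz : z ∈ Subgroup.center G) (μ : K) : Subrepresentation ρ where
  toSubmodule := End.maxGenEigenspace (ρ z) μ
  apply_mem_toSubmodule g :=
    End.mapsTo_maxGenEigenspace_of_comm (Commute.map (Subgroup.mem_center_iff.mp hz g).symm ρ) μ

variable [FiniteDimensional K V]

theorem pow_finrank_maxGenEigenspace_eq_one (ρ : Representation K G V) {z : G}
    (hz : z ∈ Subgroup.center G) (hz' : z ∈ commutator G) (μ : K) :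
    μ ^ finrank K (End.maxGenEigenspace (ρ z) μ) = 1 := by
  let W := maxGenEigenspaceSubrepresentation ρ hz μ
  have hnil : IsNilpotent (W.toRepresentation z - algebraMap K _ μ) :=
    End.isNilpotent_restrict_maxGenEigenspace_sub_algebraMap (ρ z) μ
  have hdet := LinearMap.det_eq_pow_finrank_of_isNilpotent_sub hnil
  rw [W.toRepresentation.det_eq_one_of_mem_commutator hz'] at hdet
  exact hdet.symm

theorem exists_pow_eq_one_of_isRoot_charpoly (ρ : Representation K G V) {z : G}
    (hz : z ∈ Subgroup.center G) (hz' : z ∈ commutator G) {μ : K}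
    (hμ : (ρ z).charpoly.IsRoot μ) : ∃ m, 0 < m ∧ μ ^ m = 1 := by
  refine ⟨_, ?_, pow_finrank_maxGenEigenspace_eq_one ρ hz hz' μ⟩
  rw [LinearMap.finrank_maxGenEigenspace_eq]
  exact (rootMultiplicity_pos (ρ z).charpoly_monic.ne_zero).mpr hμ

end Representation

namespace Heisenberg

open scoped commutatorElement

theorem z_mem_center : z ∈ Subgroup.center Heisenberg :=
  Subgroup.mem_center_iff.mpr fun g => by ext <;> simp [z, add_comm]

theorem z_eq_commutatorElement : z = ⁅(⟨1, 0, 0⟩ : Heisenberg), ⟨0, 1, 0⟩⁆ := by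
  ext <;> simp [z, commutatorElement_def]

theorem z_mem_commutator : z ∈ commutator Heisenberg :=
  z_eq_commutatorElement ▸
    Subgroup.commutator_mem_commutator (Subgroup.mem_top _) (Subgroup.mem_top _)

end Heisenberg

/-- Any finite-dimensional linear representation of the integral Heisenberg group
maps the central generator `z` to a matrix all of whose eigenvalues, over the
algebraic closure, are roots of unity. -/
theorem heisenberg_center_virtually_unipotent (F : Type) [Field F] (n : ℕ)
    (ρ : Heisenberg →* GL (Fin n) F) (μ : AlgebraicClosure F)
    (hμ : (((ρ Heisenberg.z : Matrix (Fin n) (Fin n) F)).map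
      (algebraMap F (AlgebraicClosure F))).charpoly.IsRoot μ) :
    ∃ m : ℕ, 0 < m ∧ μ ^ m = 1 := by
  let ρK : Representation (AlgebraicClosure F) Heisenberg (Fin n → AlgebraicClosure F) :=
    Matrix.toLinAlgEquiv'.toMonoidHom.comp <|
      (algebraMap F (AlgebraicClosure F)).mapMatrix.toMonoidHom.comp <| (Units.coeHom _).comp ρ
  refine ρK.exists_pow_eq_one_of_isRoot_charpoly Heisenberg.z_mem_center
    Heisenberg.z_mem_commutator ?_
  rwa [show ρK Heisenberg.z = Matrix.toLin' _ from rfl, Matrix.charpoly_toLin']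
end

section
/- Let F be an algebraically closed field and let γ ∈ GL(n, F). If some elements γ₁, ..., γ_g, δ₁, ..., δ_g ∈ GL(n, F) all commute with γ and γ = [γ₁,δ₁]···[γ_g,δ_g] is a product of their commutators, then every eigenvalue of γ is a root of unity. -/
/-!
Let `W` be the generalized `μ`-eigenspace of `γ`; it is nonzero because `μ` is a root of the
characteristic polynomial. Every element of the centralizer `Z` of `γ` preserves `W`, so
`z ↦ det (z|_W)` is a character of `Z` with values in the abelian group `Fˣ`, and hence is trivial
on `⁅Z, Z⁆ ∋ γ`. Since `γ - μ` is nilpotent on `W`, `det (γ|_W) = μ ^ dim W`, so `μ ^ dim W = 1`.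
-/

open Module Polynomial Subgroup
open scoped commutatorElement

lemma Subgroup.list_prod_ofFn_commutatorElement_mem {G : Type*} [Group G] {H₁ H₂ : Subgroup G}
    {g : ℕ} {a b : Fin g → G} (ha : ∀ i, a i ∈ H₁) (hb : ∀ i, b i ∈ H₂) :
    (List.ofFn fun i => ⁅a i, b i⁆).prod ∈ ⁅H₁, H₂⁆ :=
  list_prod_mem <| by
    simpa [List.mem_ofFn] using fun i => commutator_mem_commutator (ha i) (hb i)

namespace Module.End

lemma det_eq_pow_finrank_of_isNilpotent_sub_algebraMap {R M : Type*} [CommRing R] [IsDomain R]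
    [AddCommGroup M] [Module R M] [Module.Free R M] [Module.Finite R M] {f : End R M} {μ : R}
    (h : IsNilpotent (f - algebraMap R (End R M) μ)) : f.det = μ ^ finrank R M := by
  have hneg : IsNilpotent (algebraMap R (End R M) μ - f) := neg_sub f _ ▸ h.neg
  have := LinearMap.eval_charpoly (algebraMap R (End R M) μ - f) μ
  rw [sub_sub_cancel, hneg.charpoly_eq_X_pow_finrank] at this
  simpa using this.symm

variable {K V : Type*} [Field K] [AddCommGroup V] [Module K V] [FiniteDimensional K V]

lemma finrank_maxGenEigenspace_pos_iff (f : End K V) (μ : K) :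
    0 < finrank K (f.maxGenEigenspace μ) ↔ f.charpoly.IsRoot μ := by
  rw [LinearMap.finrank_maxGenEigenspace_eq, rootMultiplicity_pos f.charpoly_monic.ne_zero]

lemma det_restrict_maxGenEigenspace (f : End K V) (μ : K) :
    (f.restrict (mapsTo_maxGenEigenspace_of_comm (Commute.refl f) μ)).det =
      μ ^ finrank K (f.maxGenEigenspace μ) := by
  apply det_eq_pow_finrank_of_isNilpotent_sub_algebraMap
  convert f.isNilpotent_restrict_maxGenEigenspace_sub_algebraMap μ using 1
  ext; rfl

variable {G : Type*} [Group G]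

def restrictMaxGenEigenspace (ρ : G →* End K V) (γ : G) (μ : K) :
    centralizer {γ} →* End K ((ρ γ).maxGenEigenspace μ) where
  toFun z := (ρ z).restrict <| mapsTo_maxGenEigenspace_of_comm
    ((show Commute (z : G) γ from mem_centralizer_singleton_iff.mp z.2).map ρ).symm μ
  map_one' := by ext; simp
  map_mul' z w := by ext; simp; rfl

theorem pow_finrank_maxGenEigenspace_eq_one_of_mem_commutator_centralizer (ρ : G →* End K V)
    {γ : G} (hγ : γ ∈ ⁅centralizer {γ}, centralizer {γ}⁆) (μ : K) :
    μ ^ finrank K ((ρ γ).maxGenEigenspace μ) = 1 := by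
  let Z := centralizer {γ}
  let detW : Z →* Kˣ := (LinearMap.det.comp (restrictMaxGenEigenspace ρ γ μ)).toHomUnits
  rw [← Z.map_subtype_commutator] at hγ
  obtain ⟨z, hz, hzγ⟩ := hγ
  obtain rfl : z = ⟨γ, mem_centralizer_singleton_iff.mpr rfl⟩ := Subtype.ext hzγ
  have hdetW : detW _ = 1 := Abelianization.commutator_subset_ker detW hz
  rw [← det_restrict_maxGenEigenspace]
  exact congrArg Units.val hdetW

end Module.End

theorem eigenvalues_rootsOfUnity_of_product_of_commutators_general
    (F : Type) [Field F] (n g : ℕ)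
    (γ : GL (Fin n) F) (γs δs : Fin g → GL (Fin n) F)
    (hcommγ : ∀ i, Commute γ (γs i)) (hcommδ : ∀ i, Commute γ (δs i))
    (hγ : γ = (List.ofFn fun i : Fin g => γs i * δs i * (γs i)⁻¹ * (δs i)⁻¹).prod)
    (μ : F) (hμ : (γ : Matrix (Fin n) (Fin n) F).charpoly.IsRoot μ) :
    ∃ m : ℕ, 0 < m ∧ μ ^ m = 1 := by
  let ρ : GL (Fin n) F →* End F (Fin n → F) :=
    (Matrix.toLinAlgEquiv' (R := F) (n := Fin n)).toMonoidHom.comp (Units.coeHom _)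
  have hmem : γ ∈ ⁅centralizer {γ}, centralizer {γ}⁆ := by
    have := list_prod_ofFn_commutatorElement_mem (H₁ := centralizer {γ}) (H₂ := centralizer {γ})
      (fun i => mem_centralizer_singleton_iff.mpr (hcommγ i).symm)
      (fun i => mem_centralizer_singleton_iff.mpr (hcommδ i).symm)
    exact hγ ▸ this
  refine ⟨_, ?_, End.pow_finrank_maxGenEigenspace_eq_one_of_mem_commutator_centralizer ρ hmem μ⟩
  rwa [End.finrank_maxGenEigenspace_pos_iff, ← Matrix.charpoly_toLin'] at *

/-- If `γ ∈ GL(n, F)` (F algebraically closed) commutes with `γ₁, ..., γ_g, δ₁, ..., δ_g`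
and equals the product of their commutators, then every eigenvalue of `γ` is a root of unity. -/
theorem eigenvalues_rootsOfUnity_of_product_of_commutators
    (F : Type) [Field F] [IsAlgClosed F] (n g : ℕ)
    (γ : GL (Fin n) F) (γs δs : Fin g → GL (Fin n) F)
    (hcommγ : ∀ i, Commute γ (γs i)) (hcommδ : ∀ i, Commute γ (δs i))
    (hγ : γ = (List.ofFn fun i : Fin g => γs i * δs i * (γs i)⁻¹ * (δs i)⁻¹).prod)
    (μ : F) (hμ : (γ : Matrix (Fin n) (Fin n) F).charpoly.IsRoot μ) :
    ∃ m : ℕ, 0 < m ∧ μ ^ m = 1 :=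
  eigenvalues_rootsOfUnity_of_product_of_commutators_general F n g γ γs δs hcommγ hcommδ hγ μ hμ
end

section
/- Let F be an algebraically closed field and let S be a pairwise commuting subset of GL(n, F). Then there exists C ∈ GL(n, F) such that CAC⁻¹ is upper triangular for every A ∈ S. -/
/-!
A minimal nonzero subspace invariant under a commuting family consists of common eigenvectors:
an eigenspace of one member, intersected with it, is again invariant because the family commutes,
so by minimality it is the whole subspace. Given a common eigenvector `v`, the family descends to
`V ⧸ K ∙ v`; by induction on the dimension it is triangular there in some basis, and `v` followed
by lifts of that basis is a basis of `V` in which every member is upper triangular.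
-/

open Module Submodule

variable {K V ι : Type*} [Field K] [AddCommGroup V] [Module K V]

theorem Submodule.commute_mapQ {p : Submodule K V} {f g : End K V} (h : Commute f g)
    (hf : p ≤ p.comap f) (hg : p ≤ p.comap g) : Commute (p.mapQ p f hf) (p.mapQ p g hg) := by
  apply p.linearMap_qext
  ext x
  simp only [LinearMap.comp_apply, mkQ_apply, Module.End.mul_apply, mapQ_apply]
  exact congrArg _ (LinearMap.congr_fun h.eq x)

theorem Module.End.exists_common_eigenvector [IsAlgClosed K] [FiniteDimensional K V]
    [Nontrivial V] (f : ι → End K V) (hf : ∀ i j, Commute (f i) (f j)) :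
    ∃ v : V, v ≠ 0 ∧ ∀ i, ∃ μ : K, f i v = μ • v := by
  let invariant : Set (Submodule K V) := {W | W ≠ ⊥ ∧ ∀ i, W ≤ W.comap (f i)}
  obtain ⟨W, ⟨hW_ne_bot, hW_le⟩, hW_min⟩ :=
    wellFounded_lt.has_min invariant ⟨⊤, top_ne_bot, fun _ ↦ le_top⟩
  obtain ⟨v, hvW, hv0⟩ := W.ne_bot_iff.mp hW_ne_bot
  refine ⟨v, hv0, fun i ↦ ?_⟩
  have : Nontrivial W := nontrivial_iff_ne_bot.mpr hW_ne_bot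
  obtain ⟨μ, hμ⟩ := Module.End.exists_eigenvalue ((f i).restrict (hW_le i))
  obtain ⟨w, hw⟩ := hμ.exists_hasEigenvector
  have h_inf : W ⊓ (f i).eigenspace μ ∈ invariant := by
    refine ⟨(Submodule.ne_bot_iff _).mpr ⟨w, ⟨w.2, ?_⟩, by simpa using hw.2⟩, fun j x hx ↦ ?_⟩
    · exact mem_eigenspace_iff.mpr (congrArg Subtype.val hw.apply_eq_smul)
    · exact ⟨hW_le j hx.1, mapsTo_genEigenspace_of_comm (hf i j) μ 1 hx.2⟩
  have : W ⊓ (f i).eigenspace μ = W := inf_le_left.eq_of_not_lt (hW_min _ h_inf)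
  exact ⟨μ, mem_eigenspace_iff.mp (this.ge hvW).2⟩

theorem Fin.image_cons_Iic_succ {α : Type*} {n : ℕ} (a : α) (u : Fin n → α) (j : Fin n) :
    Fin.cons a u '' Set.Iic j.succ = insert a (u '' Set.Iic j) := by
  ext x
  simp [Fin.exists_fin_succ, eq_comm]

theorem Module.End.exists_basis_mem_span_Iic_of_commute [IsAlgClosed K] [FiniteDimensional K V]
    {n : ℕ} (h_dim : finrank K V = n) (f : ι → End K V) (hf : ∀ i j, Commute (f i) (f j)) :
    ∃ b : Basis (Fin n) K V, ∀ i j, f i (b j) ∈ span K (b '' Set.Iic j) := by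
  induction n generalizing V with
  | zero =>
    have : Subsingleton V := finrank_zero_iff.mp h_dim
    exact ⟨Basis.empty V, fun _ j ↦ j.elim0⟩
  | succ n ih =>
    have : Nontrivial V := Module.nontrivial_of_finrank_eq_succ h_dim
    obtain ⟨v, hv0, hv⟩ := exists_common_eigenvector f hf
    set W := K ∙ v
    have hW (i : ι) : W ≤ W.comap (f i) := by
      obtain ⟨μ, hμ⟩ := hv i
      rw [span_singleton_le_iff_mem, mem_comap, hμ]
      exact smul_mem _ _ (mem_span_singleton_self v)
    have h_dimQ : finrank K (V ⧸ W) = n := by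
      have := W.finrank_quotient_add_finrank
      rw [finrank_span_singleton hv0] at this
      omega
    obtain ⟨c, hc⟩ :=
      ih h_dimQ (fun i ↦ W.mapQ W (f i) (hW i)) fun i j ↦ commute_mapQ (hf i j) _ _
    obtain ⟨u, hu : W.mkQ ∘ u = c⟩ := W.mkQ_surjective.comp_left (c : Fin n → V ⧸ W)
    have h_span (s : Set (Fin n)) :
        span K (insert v (u '' s)) = comap W.mkQ (span K (c '' s)) := by
      rw [← hu, Set.image_comp, ← map_span, comap_map_mkQ, span_insert]
    have h_top : ⊤ ≤ span K (Set.range (Fin.cons v u : Fin (n + 1) → V)) := by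
      rw [Fin.range_cons, ← Set.image_univ, h_span, Set.image_univ, c.span_eq, comap_top]
    let b := basisOfTopLeSpanOfCardEqFinrank _ h_top (by simp [h_dim])
    refine ⟨b, fun i j ↦ ?_⟩
    rw [coe_basisOfTopLeSpanOfCardEqFinrank]
    cases j using Fin.cases with
    | zero =>
      obtain ⟨μ, hμ⟩ := hv i
      rw [Fin.cons_zero, hμ]
      exact smul_mem _ _ (subset_span ⟨0, Set.mem_Iic.mpr le_rfl, rfl⟩)
    | succ k =>
      have h_lift : W.mkQ (f i (u k)) = W.mapQ W (f i) (hW i) (c k) := by rw [← hu]; rfl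
      rw [Fin.cons_succ, Fin.image_cons_Iic_succ, h_span, mem_comap, h_lift]
      exact hc i k

theorem Module.Basis.blockTriangular_toMatrix_of_mem_span_Iic {κ : Type*} [Fintype κ]
    [DecidableEq κ] [Preorder κ] (b : Basis κ K V) {f : End K V}
    (hf : ∀ j, f (b j) ∈ span K (b '' Set.Iic j)) :
    (LinearMap.toMatrix b b f).BlockTriangular id := by
  intro i j hji
  rw [LinearMap.toMatrix_apply]
  by_contra h
  exact (b.repr_support_subset_of_mem_span _ (hf j) (Finsupp.mem_support_iff.mpr h)).not_gt hji

theorem Matrix.exists_blockTriangular_conj_of_commute [IsAlgClosed K] {n : ℕ}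
    (A : ι → Matrix (Fin n) (Fin n) K) (hA : ∀ i j, Commute (A i) (A j)) :
    ∃ C : GL (Fin n) K, ∀ i,
      ((C : Matrix (Fin n) (Fin n) K) * A i * (C⁻¹ : GL (Fin n) K)).BlockTriangular id := by
  obtain ⟨b, hb⟩ := Module.End.exists_basis_mem_span_Iic_of_commute (finrank_fin_fun K)
    (fun i ↦ toLin' (A i)) fun i j ↦ (hA i j).map toLinAlgEquiv'
  let e := Pi.basisFun K (Fin n)
  let C : GL (Fin n) K := ⟨b.toMatrix e, e.toMatrix b, b.toMatrix_mul_toMatrix_flip e,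
    e.toMatrix_mul_toMatrix_flip b⟩
  refine ⟨C, fun i ↦ ?_⟩
  have h_conj : (C : Matrix (Fin n) (Fin n) K) * A i * (C⁻¹ : GL (Fin n) K) =
      LinearMap.toMatrix b b (toLin' (A i)) := by
    rw [← basis_toMatrix_mul_linearMap_toMatrix_mul_basis_toMatrix b e b e,
      LinearMap.toMatrix_eq_toMatrix', LinearMap.toMatrix'_toLin']
    rfl
  rw [h_conj]
  exact b.blockTriangular_toMatrix_of_mem_span_Iic (hb i)

/-- A pairwise commuting subset of `GL(n, F)`, `F` algebraically closed, is
simultaneously upper triangularizable. -/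
theorem simultaneous_upper_triangularization
    (F : Type) [Field F] [IsAlgClosed F] (n : ℕ) (S : Set (GL (Fin n) F))
    (hcomm : ∀ A ∈ S, ∀ B ∈ S, Commute A B) :
    ∃ C : GL (Fin n) F, ∀ A ∈ S,
      ∀ i j : Fin n, j < i → (↑(C * A * C⁻¹) : Matrix (Fin n) (Fin n) F) i j = 0 := by
  obtain ⟨C, hC⟩ := Matrix.exists_blockTriangular_conj_of_commute
    (fun A : S ↦ ((A : GL (Fin n) F) : Matrix (Fin n) (Fin n) F))
    fun A B ↦ (hcomm A A.2 B B.2).map (Units.coeHom _)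
  refine ⟨C, fun A hA i j hji ↦ ?_⟩
  simpa using hC ⟨A, hA⟩ hji
end

section
/- Let M be an integer matrix with L columns and suppose there is a subset I ⊆ {1, ..., L} such that for every integer vector α ∈ ℤ^L with Mα = 0, one has α_i = 0 for all i ∈ I. Let A be a torsion-free abelian group and suppose a ∈ A^L satisfies Ma = 0 (interpreting the matrix action by integer multiples and sums in A). Then a_i = 0 for all i ∈ I. -/
/-!
Over `ℚ`, the hypothesis says that the coordinate functional `x ↦ x i` vanishes on the kernel of
`M`, so it is a rational combination of the rows of `M`. Clearing denominators gives integers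
`c` and `d ≠ 0` with `cᵀ M = d eᵢ`. Applying this identity to `a` gives `d • a i = cᵀ (M a) = 0`,
and torsion-freeness yields `a i = 0`.
-/

open Matrix

lemma Rat.exists_intCast_eq_mul {ι : Type*} [Finite ι] (x : ι → ℚ) :
    ∃ d : ℤ, d ≠ 0 ∧ ∃ y : ι → ℤ, ∀ k, (y k : ℚ) = d * x k := by
  obtain ⟨⟨d, hd⟩, hx⟩ := IsLocalization.exist_integer_multiples_of_finite (nonZeroDivisors ℤ) x
  choose y hy using hx
  exact ⟨d, nonZeroDivisors.ne_zero hd, y, fun k => by simpa using hy k⟩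

namespace Matrix

variable {m n : Type*} [Fintype n]

lemma sum_vecMul_smul {R A : Type*} [Fintype m] [Semiring R] [AddCommMonoid A] [Module R A]
    (c : m → R) (M : Matrix m n R) (a : n → A) :
    ∑ k, (c ᵥ* M) k • a k = ∑ j, c j • ∑ k, M j k • a k := by
  simp only [vecMul, dotProduct, Finset.sum_smul, Finset.smul_sum, mul_smul]
  exact Finset.sum_comm

lemma exists_vecMul_eq_single_of_mulVec_eq_zero {K : Type*} [Field K] [Fintype m]
    [DecidableEq n] (N : Matrix m n K) (i : n) (hN : ∀ x, N *ᵥ x = 0 → x i = 0) :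
    ∃ c : m → K, c ᵥ* N = Pi.single i 1 := by
  set row : m → (n → K) →ₗ[K] K := fun j => LinearMap.proj j ∘ₗ N.mulVecLin
  have hker : ⨅ j, LinearMap.ker (row j) ≤ LinearMap.ker (LinearMap.proj i) := by
    intro x hx
    simp only [Submodule.mem_iInf, LinearMap.mem_ker] at hx
    exact hN x (funext hx)
  obtain ⟨c, hc⟩ :=
    (Submodule.mem_span_range_iff_exists_fun K).1 (mem_span_of_iInf_ker_le_ker hker)
  refine ⟨c, funext fun k => ?_⟩
  simpa [row, vecMul, dotProduct, Pi.single_apply, eq_comm, mul_comm] using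
    LinearMap.congr_fun hc (Pi.single k 1)

lemma apply_eq_zero_of_mulVec_intCast_eq_zero (M : Matrix m n ℤ) (i : n)
    (hM : ∀ α : n → ℤ, M *ᵥ α = 0 → α i = 0) (x : n → ℚ) (hx : M.map (↑) *ᵥ x = 0) :
    x i = 0 := by
  obtain ⟨d, hd, y, hy⟩ := Rat.exists_intCast_eq_mul x
  have hy0 : M *ᵥ y = 0 := by
    ext j
    have : ((M *ᵥ y) j : ℚ) = d * (M.map (↑) *ᵥ x) j := by
      simp [mulVec, dotProduct, hy, Finset.mul_sum, mul_left_comm]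
    rw [hx, Pi.zero_apply, mul_zero] at this
    exact_mod_cast this
  have : (d : ℚ) * x i = 0 := by rw [← hy, hM y hy0, Int.cast_zero]
  simpa [hd] using this

lemma exists_vecMul_eq_single_of_mulVec_eq_zero_int [Fintype m] [DecidableEq n]
    (M : Matrix m n ℤ) (i : n) (hM : ∀ α : n → ℤ, M *ᵥ α = 0 → α i = 0) :
    ∃ d : ℤ, d ≠ 0 ∧ ∃ c : m → ℤ, c ᵥ* M = Pi.single i d := by
  obtain ⟨c, hc⟩ := exists_vecMul_eq_single_of_mulVec_eq_zero (M.map ((↑) : ℤ → ℚ)) i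
    (M.apply_eq_zero_of_mulVec_intCast_eq_zero i hM)
  obtain ⟨d, hd, c', hc'⟩ := Rat.exists_intCast_eq_mul c
  refine ⟨d, hd, c', funext fun k => ?_⟩
  have : ((c' ᵥ* M) k : ℚ) = d * (c ᵥ* M.map (↑)) k := by
    simp [vecMul, dotProduct, hc', Finset.mul_sum, mul_assoc]
  rw [hc] at this
  have hsingle : ((Pi.single i d : n → ℤ) k : ℚ) = d * (Pi.single i 1 : n → ℚ) k := by
    by_cases hk : k = i <;> simp [hk]
  exact_mod_cast this.trans hsingle.symm

end Matrix

/-- If every integer solution `α` of `Mα = 0` has `α_i = 0` for `i ∈ I`, then the same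
holds for solutions with entries in any torsion-free abelian group `A`. -/
theorem torsion_free_abelian_solutions
    (J L : ℕ) (M : Matrix (Fin J) (Fin L) ℤ) (I : Set (Fin L))
    (hInt : ∀ α : Fin L → ℤ, (∀ j : Fin J, ∑ i : Fin L, M j i * α i = 0) →
      ∀ i ∈ I, α i = 0)
    (A : Type) [AddCommGroup A]
    (htf : ∀ (m : ℤ) (x : A), m ≠ 0 → m • x = 0 → x = 0)
    (a : Fin L → A) (ha : ∀ j : Fin J, ∑ i : Fin L, M j i • a i = 0) :
    ∀ i ∈ I, a i = 0 := by
  intro i hi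
  obtain ⟨d, hd, c, hc⟩ := M.exists_vecMul_eq_single_of_mulVec_eq_zero_int i
    fun α hα => hInt α (congrFun hα) i hi
  refine htf d (a i) hd ?_
  calc d • a i = ∑ k, (c ᵥ* M) k • a k := by simp [hc, Pi.single_apply]
    _ = ∑ j, c j • ∑ k, M j k • a k := sum_vecMul_smul c M a
    _ = 0 := by simp [ha]
end

section
/- Let Γ be a group, γ ∈ Γ a virtually unipotent element, and Γ₀ ≤ Γ an abelian subgroup generated by virtually unipotent elements of Γ. Then every element of Γ₀ is virtually unipotent in Γ. In particular, any conjugate of a virtually unipotent element is virtually unipotent. -/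
/-- An element `γ` of a group `Γ` is virtually unipotent if every finite-dimensional
linear representation of `Γ` (over any field) sends `γ` to a matrix all of whose
eigenvalues, over the algebraic closure, are roots of unity. -/
def IsVirtuallyUnipotent {Γ : Type*} [Group Γ] (γ : Γ) : Prop :=
  ∀ (F : Type) (_ : Field F) (n : ℕ) (ρ : Γ →* GL (Fin n) F)
    (μ : AlgebraicClosure F),
    (((ρ γ : Matrix (Fin n) (Fin n) F)).map
      (algebraMap F (AlgebraicClosure F))).charpoly.IsRoot μ →
    ∃ m : ℕ, 0 < m ∧ μ ^ m = 1

/-! Over an algebraically closed field, the eigenvalues of a matrix `A` are all roots of unity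
exactly when `A ^ N - 1` is nilpotent for some `N > 0`: one direction is the spectral mapping
`μ ↦ μ ^ N - 1`, the other is Cayley–Hamilton applied to a power of `X ^ N - 1` divisible by the
characteristic polynomial. In this ring-theoretic form the property visibly survives products of
commuting elements (pass to a common power; commuting nilpotents have nilpotent sum) and inverses,
so it spreads from generators to the abelian group they generate. Conjugation invariance is that
of the characteristic polynomial. -/

open Polynomial

def IsQuasiUnipotent {R : Type*} [Ring R] (x : R) : Prop :=
  ∃ N, 0 < N ∧ IsNilpotent (x ^ N - 1)

section Ring

variable {R : Type*} [Ring R] {x y : R}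

theorem IsNilpotent.pow_sub_one (h : IsNilpotent (x - 1)) (k : ℕ) : IsNilpotent (x ^ k - 1) := by
  rw [← geom_sum_mul]
  refine Commute.isNilpotent_mul_left ?_ h
  exact Commute.sum_left _ _ _ fun i _ =>
    ((Commute.refl x).pow_left i).sub_right (Commute.one_right _)

theorem Commute.isNilpotent_mul_sub_one (hxy : Commute x y) (hx : IsNilpotent (x - 1))
    (hy : IsNilpotent (y - 1)) : IsNilpotent (x * y - 1) := by
  have hxy' : Commute (x - 1) y := hxy.sub_left (Commute.one_left y)
  have hsplit : x * y - 1 = (x - 1) * y + (y - 1) := by noncomm_ring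
  rw [hsplit]
  refine Commute.isNilpotent_add ?_ (hxy'.isNilpotent_mul_right hx) hy
  exact (hxy'.sub_right (Commute.one_right _)).mul_left
    ((Commute.refl y).sub_right (Commute.one_right y))

theorem IsQuasiUnipotent.one : IsQuasiUnipotent (1 : R) := ⟨1, one_pos, by simp⟩

theorem Commute.isQuasiUnipotent_mul (hxy : Commute x y) (hx : IsQuasiUnipotent x)
    (hy : IsQuasiUnipotent y) : IsQuasiUnipotent (x * y) := by
  obtain ⟨M, hM, hxM⟩ := hx
  obtain ⟨N, hN, hyN⟩ := hy
  refine ⟨M * N, Nat.mul_pos hM hN, ?_⟩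
  rw [hxy.mul_pow, pow_mul x M N, mul_comm M N, pow_mul y N M]
  exact ((hxy.pow_pow M N).pow_pow N M).isNilpotent_mul_sub_one (hxM.pow_sub_one N)
    (hyN.pow_sub_one M)

theorem Units.isQuasiUnipotent_inv {u : Rˣ} (hu : IsQuasiUnipotent (u : R)) :
    IsQuasiUnipotent (↑u⁻¹ : R) := by
  obtain ⟨N, hN, hnil⟩ := hu
  refine ⟨N, hN, ?_⟩
  have hfactor : (↑u⁻¹ : R) ^ N - 1 = -((↑u⁻¹ : R) ^ N * ((u : R) ^ N - 1)) := by
    rw [mul_sub, mul_one, ← Units.val_pow_eq_pow_val, ← Units.val_pow_eq_pow_val,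
      ← Units.val_mul, inv_pow, inv_mul_cancel, Units.val_one, neg_sub]
  rw [hfactor]
  exact ((((Commute.refl (u : R)).units_inv_left).pow_pow N N).sub_right
    (Commute.one_right _)).isNilpotent_mul_left hnil |>.neg

theorem MonoidHom.isQuasiUnipotent_of_mem_closure {G : Type*} [Group G] (ψ : G →* Rˣ)
    {S : Set G} (hcomm : ∀ a ∈ Subgroup.closure S, ∀ b ∈ Subgroup.closure S, a * b = b * a)
    (hS : ∀ s ∈ S, IsQuasiUnipotent (ψ s : R)) {g : G} (hg : g ∈ Subgroup.closure S) :
    IsQuasiUnipotent (ψ g : R) := by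
  induction hg using Subgroup.closure_induction with
  | mem s hs => exact hS s hs
  | one => simpa using IsQuasiUnipotent.one
  | mul a b ha hb iha ihb =>
    have hab : Commute (ψ a : R) (ψ b) := by
      simp only [Commute, SemiconjBy, ← Units.val_mul, ← map_mul, hcomm a ha b hb]
    simpa using hab.isQuasiUnipotent_mul iha ihb
  | inv a _ iha => simpa using Units.isQuasiUnipotent_inv iha

end Ring

namespace Matrix

variable {K n : Type*} [Field K] [Fintype n] [DecidableEq n] {A : Matrix n n K}

theorem eq_zero_of_isRoot_charpoly_of_isNilpotent (hA : IsNilpotent A) {μ : K}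
    (hμ : A.charpoly.IsRoot μ) : μ = 0 := by
  have hchar : A.charpoly = X ^ Fintype.card n :=
    sub_eq_zero.mp (isNilpotent_charpoly_sub_pow_of_isNilpotent hA).eq_zero
  rw [hchar, IsRoot, eval_pow, eval_X] at hμ
  exact eq_zero_of_pow_eq_zero hμ

theorem pow_eq_one_of_isRoot_charpoly {N : ℕ} (hA : IsNilpotent (A ^ N - 1)) {μ : K}
    (hμ : A.charpoly.IsRoot μ) : μ ^ N = 1 := by
  rw [← mem_spectrum_iff_isRoot_charpoly] at hμ
  have hmem := spectrum.subset_polynomial_aeval A (X ^ N - 1) ⟨μ, hμ, rfl⟩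
  simp only [eval_sub, eval_pow, eval_X, eval_one, map_sub, map_pow, aeval_X, map_one,
    mem_spectrum_iff_isRoot_charpoly] at hmem
  exact sub_eq_zero.mp (eq_zero_of_isRoot_charpoly_of_isNilpotent hA hmem)

theorem isNilpotent_pow_sub_one_of_forall_isRoot_charpoly [IsAlgClosed K] {N : ℕ}
    (h : ∀ μ, A.charpoly.IsRoot μ → μ ^ N = 1) : IsNilpotent (A ^ N - 1) := by
  have hdvd : A.charpoly ∣ (X ^ N - 1) ^ Multiset.card A.charpoly.roots := by
    conv_lhs => rw [(IsAlgClosed.splits A.charpoly).eq_prod_roots_of_monic A.charpoly_monic]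
    rw [← Multiset.prod_replicate, ← Multiset.map_const']
    refine Multiset.prod_dvd_prod_of_dvd _ _ fun μ hμ => ?_
    rw [dvd_iff_isRoot, IsRoot, eval_sub, eval_pow, eval_X, eval_one,
      h μ (isRoot_of_mem_roots hμ), sub_self]
  obtain ⟨q, hq⟩ := hdvd
  refine ⟨Multiset.card A.charpoly.roots, ?_⟩
  have hA := congrArg (aeval A) hq
  rwa [map_mul, aeval_self_charpoly, zero_mul, map_pow, map_sub, map_pow, aeval_X, map_one]
    at hA

theorem isQuasiUnipotent_iff_forall_isRoot_charpoly [IsAlgClosed K] :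
    IsQuasiUnipotent A ↔ ∀ μ, A.charpoly.IsRoot μ → IsOfFinOrder μ := by
  classical
  constructor
  · rintro ⟨N, hN, hA⟩ μ hμ
    exact isOfFinOrder_iff_pow_eq_one.mpr ⟨N, hN, pow_eq_one_of_isRoot_charpoly hA hμ⟩
  · intro h
    have hroots {μ : K} : μ ∈ A.charpoly.roots.toFinset ↔ A.charpoly.IsRoot μ := by
      rw [Multiset.mem_toFinset, mem_roots A.charpoly_monic.ne_zero]
    refine ⟨∏ μ ∈ A.charpoly.roots.toFinset, orderOf μ,
      Finset.prod_pos fun μ hμ => (h μ (hroots.mp hμ)).orderOf_pos,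
      isNilpotent_pow_sub_one_of_forall_isRoot_charpoly fun μ hμ => ?_⟩
    exact orderOf_dvd_iff_pow_eq_one.mp (Finset.dvd_prod_of_mem _ (hroots.mpr hμ))

end Matrix

theorem isVirtuallyUnipotent_iff {Γ : Type*} [Group Γ] {γ : Γ} :
    IsVirtuallyUnipotent γ ↔ ∀ (F : Type) [Field F] (n : ℕ) (ρ : Γ →* GL (Fin n) F),
      IsQuasiUnipotent
        (Matrix.GeneralLinearGroup.map (algebraMap F (AlgebraicClosure F)) (ρ γ) :
          Matrix (Fin n) (Fin n) (AlgebraicClosure F)) := by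
  simp only [IsVirtuallyUnipotent, Matrix.isQuasiUnipotent_iff_forall_isRoot_charpoly,
    isOfFinOrder_iff_pow_eq_one]
  rfl

theorem IsVirtuallyUnipotent.conj {Γ : Type*} [Group Γ] {γ : Γ} (hγ : IsVirtuallyUnipotent γ)
    (δ : Γ) : IsVirtuallyUnipotent (δ * γ * δ⁻¹) := by
  intro F _ n ρ μ hμ
  refine hγ F _ n ρ μ ?_
  rwa [map_mul, map_mul, map_inv, Units.val_mul, Units.val_mul, Matrix.coe_units_inv,
    Matrix.charpoly_map, Matrix.charpoly_units_conj, ← Matrix.charpoly_map] at hμ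

/-- If `Γ₀` is an abelian subgroup of `Γ` generated by virtually unipotent elements of
`Γ`, then every element of `Γ₀` is virtually unipotent in `Γ`; in particular, every
conjugate of a virtually unipotent element `γ` is virtually unipotent. -/
theorem virtually_unipotent_of_abelian_generated_and_conjugates
    {Γ : Type*} [Group Γ] (γ : Γ) (hγ : IsVirtuallyUnipotent γ)
    (Γ₀ : Subgroup Γ) (S : Set Γ) (hgen : Γ₀ = Subgroup.closure S)
    (hS : ∀ g ∈ S, IsVirtuallyUnipotent g)
    (habel : ∀ a ∈ Γ₀, ∀ b ∈ Γ₀, a * b = b * a) :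
    (∀ g ∈ Γ₀, IsVirtuallyUnipotent g) ∧
    (∀ δ : Γ, IsVirtuallyUnipotent (δ * γ * δ⁻¹)) := by
  subst hgen
  refine ⟨fun g hg => isVirtuallyUnipotent_iff.mpr fun F _ n ρ => ?_, hγ.conj⟩
  exact MonoidHom.isQuasiUnipotent_of_mem_closure
    ((Matrix.GeneralLinearGroup.map (algebraMap F (AlgebraicClosure F))).comp ρ) habel
    (fun s hs => isVirtuallyUnipotent_iff.mp (hS s hs) F n ρ) hg
end

section
/- Let a, b, c, d be nonnegative integers with |ad − bc| = 1, b > 0, c > 0, and a > 0. Suppose given integers λ₁,...,λ_k, integers μ_{r,s} for 1 ≤ r ≤ k, 1 ≤ s ≤ ℓ, and nonnegative integers n_{r,s} with Σ_s n_{r,s} > 0 for each r, satisfying: (i) aλ_r + bμ_{r,s} is independent of r for each fixed s; (ii) Σ_s n_{r,s} μ_{r,s} = 0 for each r; (iii) Σ_r n_{r,s}(cλ_r + dμ_{r,s}) = 0 for each s. Then λ_r = 0 for all r. -/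
/-- Integer-combinatorial core of the edge case: under the given linear relations
arising from eigenvalue equations, all `λ_r` vanish. -/
theorem edge_case_lambdas_vanish (a b c d : ℤ)
    (ha : 0 < a) (hb : 0 < b) (hc : 0 < c) (hd : 0 ≤ d)
    (hdet : a * d - b * c = 1 ∨ a * d - b * c = -1)
    (k l : ℕ) (lam : Fin k → ℤ) (mu : Fin k → Fin l → ℤ) (N : Fin k → Fin l → ℕ)
    (hrow : ∀ r : Fin k, 0 < ∑ s : Fin l, N r s)
    (hi : ∀ (s : Fin l) (r r' : Fin k), a * lam r + b * mu r s = a * lam r' + b * mu r' s)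
    (hii : ∀ r : Fin k, ∑ s : Fin l, (N r s : ℤ) * mu r s = 0)
    (hiii : ∀ s : Fin l, ∑ r : Fin k, (N r s : ℤ) * (c * lam r + d * mu r s) = 0) :
    ∀ r : Fin k, lam r = 0 := by
  intro r0
  set T : ℤ := ∑ r : Fin k, ∑ s : Fin l,
      (N r s : ℤ) * ((a * lam r + b * mu r s) * (c * lam r + d * mu r s)) with hT
  have hT0 : T = 0 := by
    rw [hT, Finset.sum_comm]
    apply Finset.sum_eq_zero
    intro s _
    have hcongr : ∀ r ∈ (Finset.univ : Finset (Fin k)),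
        (N r s : ℤ) * ((a * lam r + b * mu r s) * (c * lam r + d * mu r s)) =
        (a * lam r0 + b * mu r0 s) * ((N r s : ℤ) * (c * lam r + d * mu r s)) := by
      intro r _
      rw [← hi s r r0]; ring
    rw [Finset.sum_congr rfl hcongr, ← Finset.mul_sum, hiii s, mul_zero]
  have hT2 : T = ∑ r : Fin k,
      ((a * c) * lam r ^ 2 * (∑ s : Fin l, (N r s : ℤ)) +
        (b * d) * ∑ s : Fin l, (N r s : ℤ) * (mu r s) ^ 2) := by
    rw [hT]
    apply Finset.sum_congr rfl
    intro r _
    have h1 : ∀ s ∈ (Finset.univ : Finset (Fin l)),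
        (N r s : ℤ) * ((a * lam r + b * mu r s) * (c * lam r + d * mu r s)) =
        (a * c) * lam r ^ 2 * (N r s : ℤ) +
          (a * d + b * c) * lam r * ((N r s : ℤ) * mu r s) +
          (b * d) * ((N r s : ℤ) * (mu r s) ^ 2) := by
      intro s _; ring
    rw [Finset.sum_congr rfl h1, Finset.sum_add_distrib, Finset.sum_add_distrib,
      ← Finset.mul_sum, ← Finset.mul_sum, ← Finset.mul_sum, hii r]
    ring
  have hnn : ∀ r ∈ (Finset.univ : Finset (Fin k)),
      0 ≤ (a * c) * lam r ^ 2 * (∑ s : Fin l, (N r s : ℤ)) +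
        (b * d) * ∑ s : Fin l, (N r s : ℤ) * (mu r s) ^ 2 := by
    intro r _
    have h1 : 0 ≤ (a * c) * lam r ^ 2 * (∑ s : Fin l, (N r s : ℤ)) := by
      apply mul_nonneg (mul_nonneg (by positivity) (sq_nonneg _))
      exact Finset.sum_nonneg fun s _ => Int.natCast_nonneg _
    have h2 : 0 ≤ (b * d) * ∑ s : Fin l, (N r s : ℤ) * (mu r s) ^ 2 := by
      apply mul_nonneg (mul_nonneg hb.le hd)
      exact Finset.sum_nonneg fun s _ => mul_nonneg (Int.natCast_nonneg _) (sq_nonneg _)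
    linarith
  have hzero := (Finset.sum_eq_zero_iff_of_nonneg hnn).mp (by rw [← hT2, hT0]) r0
    (Finset.mem_univ r0)
  have h2 : 0 ≤ (b * d) * ∑ s : Fin l, (N r0 s : ℤ) * (mu r0 s) ^ 2 := by
    apply mul_nonneg (mul_nonneg hb.le hd)
    exact Finset.sum_nonneg fun s _ => mul_nonneg (Int.natCast_nonneg _) (sq_nonneg _)
  have hsum : 0 < ∑ s : Fin l, (N r0 s : ℤ) := by
    exact_mod_cast hrow r0
  have hsq : lam r0 ^ 2 = 0 := by
    nlinarith [sq_nonneg (lam r0), mul_pos (mul_pos ha hc) hsum]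
  exact pow_eq_zero_iff (n := 2) (by norm_num) |>.mp hsq
end

section
/- Suppose given integers λ₁,...,λ_k, integers μ_{r,s} for 1 ≤ r ≤ k, 1 ≤ s ≤ ℓ, a nonzero integer b, and nonnegative integers n_{r,s}, satisfying: (i) λ_r + bμ_{r,s} is independent of r for each fixed s; (ii) Σ_s n_{r,s} μ_{r,s} = 0 for each r; (iii) Σ_r n_{r,s} μ_{r,s} = 0 for each s. Then μ_{r,s} = 0 whenever n_{r,s} > 0. -/
/-- Integer-combinatorial core of the case `c = 0`, `a = d = 1`: the `μ_{r,s}` vanish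
wherever `n_{r,s} > 0`. -/
theorem dehn_twist_case_mus_vanish (b : ℤ) (hb : b ≠ 0)
    (k l : ℕ) (lam : Fin k → ℤ) (mu : Fin k → Fin l → ℤ) (N : Fin k → Fin l → ℕ)
    (hi : ∀ (s : Fin l) (r r' : Fin k), lam r + b * mu r s = lam r' + b * mu r' s)
    (hii : ∀ r : Fin k, ∑ s : Fin l, (N r s : ℤ) * mu r s = 0)
    (hiii : ∀ s : Fin l, ∑ r : Fin k, (N r s : ℤ) * mu r s = 0) :
    ∀ (r : Fin k) (s : Fin l), 0 < N r s → mu r s = 0 := by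
  intro r s hN
  -- row sums of N * (b * mu) vanish
  have h1 : ∀ r' : Fin k, ∑ s' : Fin l, (N r' s' : ℤ) * (b * mu r' s') = 0 := by
    intro r'
    have : ∑ s' : Fin l, (N r' s' : ℤ) * (b * mu r' s')
        = b * ∑ s' : Fin l, (N r' s' : ℤ) * mu r' s' := by
      rw [Finset.mul_sum]; exact Finset.sum_congr rfl fun _ _ => by ring
    rw [this, hii, mul_zero]
  -- column sums of N * (b * mu) vanish
  have h2 : ∀ s' : Fin l, ∑ r' : Fin k, (N r' s' : ℤ) * (b * mu r' s') = 0 := by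
    intro s'
    have : ∑ r' : Fin k, (N r' s' : ℤ) * (b * mu r' s')
        = b * ∑ r' : Fin k, (N r' s' : ℤ) * mu r' s' := by
      rw [Finset.mul_sum]; exact Finset.sum_congr rfl fun _ _ => by ring
    rw [this, hiii, mul_zero]
  -- the key vanishing of the weighted sum of squares
  have hsum : ∑ r' : Fin k, ∑ s' : Fin l, (N r' s' : ℤ) * (b * mu r' s') ^ 2 = 0 := by
    have step : ∑ r' : Fin k, ∑ s' : Fin l, (N r' s' : ℤ) * (b * mu r' s') ^ 2
        = ∑ r' : Fin k, ∑ s' : Fin l,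
            ((lam r + b * mu r s') * ((N r' s' : ℤ) * (b * mu r' s'))
              - lam r' * ((N r' s' : ℤ) * (b * mu r' s'))) := by
      refine Finset.sum_congr rfl fun r' _ => Finset.sum_congr rfl fun s' _ => ?_
      have h := hi s' r' r
      linear_combination ((N r' s' : ℤ) * (b * mu r' s')) * h
    have e1 : ∑ r' : Fin k, ∑ s' : Fin l,
        (lam r + b * mu r s') * ((N r' s' : ℤ) * (b * mu r' s')) = 0 := by
      rw [Finset.sum_comm]
      refine Finset.sum_eq_zero fun s' _ => ?_
      rw [← Finset.mul_sum, h2, mul_zero]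
    have e2 : ∑ r' : Fin k, ∑ s' : Fin l,
        lam r' * ((N r' s' : ℤ) * (b * mu r' s')) = 0 := by
      refine Finset.sum_eq_zero fun r' _ => ?_
      rw [← Finset.mul_sum, h1, mul_zero]
    rw [step]
    simp only [Finset.sum_sub_distrib]
    rw [e1, e2, sub_zero]
  -- nonnegativity forces each term to vanish
  have hterm : (N r s : ℤ) * (b * mu r s) ^ 2 = 0 := by
    have hnn : ∀ r' ∈ Finset.univ, ∀ s' ∈ (Finset.univ : Finset (Fin l)),
        (0 : ℤ) ≤ (N r' s' : ℤ) * (b * mu r' s') ^ 2 := fun r' _ s' _ =>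
      mul_nonneg (Int.natCast_nonneg _) (sq_nonneg _)
    have houter := (Finset.sum_eq_zero_iff_of_nonneg
      (fun r' _ => Finset.sum_nonneg (hnn r' (Finset.mem_univ r')))).mp hsum
      r (Finset.mem_univ r)
    exact (Finset.sum_eq_zero_iff_of_nonneg (hnn r (Finset.mem_univ r))).mp houter
      s (Finset.mem_univ s)
  have hNpos : (0 : ℤ) < (N r s : ℤ) := by exact_mod_cast hN
  have hsq : (b * mu r s) ^ 2 = 0 := by
    rcases mul_eq_zero.mp hterm with h | h
    · exact absurd h hNpos.ne'
    · exact h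
  have := pow_eq_zero_iff (n := 2) (by norm_num) |>.mp hsq
  rcases mul_eq_zero.mp this with h | h
  · exact absurd h hb
  · exact h
end

section
/- Let Γ be a group containing an element γ of infinite order that is virtually unipotent. Then for any field F of positive characteristic and any n, there is no injective group homomorphism Γ → GL(n, F). -/
open Polynomial

theorem Finset.exists_pow_eq_one_of_isOfFinOrder {M : Type*} [Monoid M] (s : Finset M)
    (h : ∀ x ∈ s, IsOfFinOrder x) : ∃ m, 0 < m ∧ ∀ x ∈ s, x ^ m = 1 :=
  ⟨∏ x ∈ s, orderOf x, Finset.prod_pos fun x hx => (h x hx).orderOf_pos,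
    fun _ hx => orderOf_dvd_iff_pow_eq_one.mp (Finset.dvd_prod_of_mem _ hx)⟩

theorem isOfFinOrder_of_isNilpotent_sub_one {R : Type*} [Ring R] (p : ℕ) [Fact p.Prime]
    [CharP R p] {x : R} (h : IsNilpotent (x - 1)) : IsOfFinOrder x := by
  obtain ⟨k, hk⟩ := h
  have hzero : (x - 1) ^ p ^ k = 0 :=
    pow_eq_zero_of_le (Nat.lt_pow_self (Fact.out : p.Prime).one_lt).le hk
  rw [sub_pow_char_pow_of_commute p k (Commute.one_right x), one_pow, sub_eq_zero] at hzero
  exact isOfFinOrder_iff_pow_eq_one.mpr ⟨p ^ k, pow_pos (Fact.out : p.Prime).pos k, hzero⟩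

theorem Polynomial.Splits.dvd_pow_card_roots {R : Type*} [CommRing R] [IsDomain R]
    {f g : R[X]} (hf : f.Splits) (hm : f.Monic) (h : ∀ a ∈ f.roots, g.IsRoot a) :
    f ∣ g ^ f.roots.card := by
  have hdvd := Multiset.prod_dvd_prod_of_dvd (fun a => X - C a) (fun _ => g)
    fun a ha => dvd_iff_isRoot.mpr (h a ha)
  rwa [Multiset.map_const', Multiset.prod_replicate, ← hf.eq_prod_roots_of_monic hm] at hdvd

namespace Matrix

variable {n K : Type*} [Fintype n] [DecidableEq n] [Field K]

theorem isNilpotent_aeval_of_forall_isRoot {B : Matrix n n K} (hB : B.charpoly.Splits)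
    {g : K[X]} (h : ∀ a ∈ B.charpoly.roots, g.IsRoot a) : IsNilpotent (aeval B g) := by
  obtain ⟨q, hq⟩ := hB.dvd_pow_card_roots B.charpoly_monic h
  exact ⟨_, by rw [← map_pow, hq, map_mul, aeval_self_charpoly, zero_mul]⟩

theorem isOfFinOrder_of_forall_isRoot_charpoly (p : ℕ) [Fact p.Prime] [CharP K p]
    {B : Matrix n n K} (hB : B.charpoly.Splits)
    (h : ∀ μ, B.charpoly.IsRoot μ → IsOfFinOrder μ) : IsOfFinOrder B := by
  classical
  -- `Matrix n n K` has characteristic `p` only for nonempty `n`.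
  rcases isEmpty_or_nonempty n with _ | _
  · exact orderOf_pos_iff.mp (Subsingleton.orderOf_eq B ▸ one_pos)
  obtain ⟨m, hm, hroots⟩ := B.charpoly.roots.toFinset.exists_pow_eq_one_of_isOfFinOrder
    fun μ hμ => h μ (isRoot_of_mem_roots (Multiset.mem_toFinset.mp hμ))
  have hnil := isNilpotent_aeval_of_forall_isRoot hB (g := X ^ m - 1)
    fun μ hμ => by simp [hroots μ (Multiset.mem_toFinset.mpr hμ)]
  rw [map_sub, map_pow, aeval_X, map_one] at hnil
  exact (isOfFinOrder_of_isNilpotent_sub_one p hnil).of_pow hm.ne'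

end Matrix

/-- A group containing an infinite-order virtually unipotent element admits no faithful
finite-dimensional linear representation over a field of positive characteristic. -/
theorem not_linear_pos_char_of_infinite_order_virtually_unipotent
    {Γ : Type*} [Group Γ] (γ : Γ) (hγ : IsVirtuallyUnipotent γ)
    (hinf : ¬ IsOfFinOrder γ)
    (F : Type) [Field F] (hchar : ringChar F ≠ 0) (n : ℕ) (ρ : Γ →* GL (Fin n) F) :
    ¬ Function.Injective ρ := by
  intro hinj
  apply hinf
  set p := ringChar F
  have : NeZero p := ⟨hchar⟩
  have := CharP.char_is_prime_of_pos F p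
  have hfin := Matrix.isOfFinOrder_of_forall_isRoot_charpoly p
    (B := (ρ γ : Matrix (Fin n) (Fin n) F).map (algebraMap F (AlgebraicClosure F)))
    (IsAlgClosed.splits _)
    fun μ hμ => isOfFinOrder_iff_pow_eq_one.mpr (hγ F _ n ρ μ hμ)
  have hmap : Function.Injective
      ((algebraMap F (AlgebraicClosure F)).mapMatrix (m := Fin n)).toMonoidHom :=
    Matrix.map_injective (algebraMap F _).injective
  exact hinj.isOfFinOrder_iff.mp (Units.isOfFinOrder_val.mp (hmap.isOfFinOrder_iff.mp hfin))
end
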